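/- arXiv:math/0503621 — 8 statements merged into one kernel-verified Lean document; each statement's English description precedes it below -/
import Mathlib

section
/- For every feasible caching vector U (i.e., U i > 0 for all i and ∑ i, U i = V), the total weighted number of external memory calls satisfies ∑ i, N i * W i / U i ≥ (∑ i, Real.sqrt (N i * W i))^2 / V. -/
theorem caching_F1_lower_bound_general (H : ℕ)
    (W N : Fin H → ℝ) (hW : ∀ i, 0 < W i) (hN : ∀ i, 0 < N i)
    (V : ℝ)
    (U : Fin H → ℝ) (hU : ∀ i, 0 < U i) (hsum : ∑ i, U i = V) :
    ∑ i, N i * W i / U i ≥ (∑ i, Real.sqrt (N i * W i)) ^ 2 / V := by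
  have sq_sqrt_NW (i : Fin H) : Real.sqrt (N i * W i) ^ 2 = N i * W i :=
    Real.sq_sqrt (mul_nonneg (hN i).le (hW i).le)
  calc (∑ i, Real.sqrt (N i * W i)) ^ 2 / V
      = (∑ i, Real.sqrt (N i * W i)) ^ 2 / ∑ i, U i := by rw [hsum]
    _ ≤ ∑ i, Real.sqrt (N i * W i) ^ 2 / U i :=
        Finset.sq_sum_div_le_sum_sq_div _ _ fun i _ => hU i
    _ = ∑ i, N i * W i / U i := by simp only [sq_sqrt_NW]

/-- Theorem 1 (lower bound part): for every feasible caching vector `U`,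
the total weighted number of external memory calls `F₁(U) = ∑ i, N i * W i / U i`
is at least `(∑ i, √(N i * W i))² / V`. -/
theorem caching_F1_lower_bound (H : ℕ) (hH : 0 < H)
    (W N : Fin H → ℝ) (hW : ∀ i, 0 < W i) (hN : ∀ i, 0 < N i)
    (V : ℝ) (hV : 0 < V)
    (U : Fin H → ℝ) (hU : ∀ i, 0 < U i) (hsum : ∑ i, U i = V) :
    ∑ i, N i * W i / U i ≥ (∑ i, Real.sqrt (N i * W i)) ^ 2 / V :=
  caching_F1_lower_bound_general H W N hW hN V U hU hsum
end

section
/- The caching vector defined by U i = V * Real.sqrt (N i * W i) / (∑ j, Real.sqrt (N j * W j)) is feasible (each U i > 0 and ∑ i, U i = V) and attains the value ∑ i, N i * W i / U i = (∑ i, Real.sqrt (N i * W i))^2 / V; consequently it minimizes F₁ over all feasible caching vectors. -/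
/-- Theorem 1 (attainment part): the caching vector
`U i = V * √(N i * W i) / ∑ j, √(N j * W j)` is feasible, attains
`F₁(U) = (∑ i, √(N i * W i))² / V`, and minimizes `F₁` over all
feasible caching vectors. -/
theorem caching_F1_attained (H : ℕ) (hH : 0 < H)
    (W N : Fin H → ℝ) (hW : ∀ i, 0 < W i) (hN : ∀ i, 0 < N i)
    (V : ℝ) (hV : 0 < V) :
    let U : Fin H → ℝ :=
      fun i => V * Real.sqrt (N i * W i) / ∑ j, Real.sqrt (N j * W j)
    (∀ i, 0 < U i) ∧ (∑ i, U i = V) ∧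
    (∑ i, N i * W i / U i = (∑ i, Real.sqrt (N i * W i)) ^ 2 / V) ∧
    (∀ U' : Fin H → ℝ, (∀ i, 0 < U' i) → (∑ i, U' i = V) →
      ∑ i, N i * W i / U i ≤ ∑ i, N i * W i / U' i) := by
  intro U
  have hNW : ∀ i, 0 < N i * W i := fun i => mul_pos (hN i) (hW i)
  have hs : ∀ i, 0 < Real.sqrt (N i * W i) := fun i => Real.sqrt_pos.2 (hNW i)
  have hS : 0 < ∑ j, Real.sqrt (N j * W j) :=
    Finset.sum_pos (fun i _ => hs i) (Finset.univ_nonempty_iff.2 ⟨⟨0, hH⟩⟩)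
  have hU : ∀ i, 0 < U i := fun i =>
    div_pos (mul_pos hV (hs i)) hS
  have hsum : ∑ i, U i = V := by
    simp only [U]
    rw [← Finset.sum_div]
    rw [← Finset.mul_sum]
    field_simp
  have hval : ∑ i, N i * W i / U i = (∑ i, Real.sqrt (N i * W i)) ^ 2 / V := by
    have : ∀ i, N i * W i / U i =
        Real.sqrt (N i * W i) * (∑ j, Real.sqrt (N j * W j)) / V := by
      intro i
      have h1 : N i * W i = Real.sqrt (N i * W i) * Real.sqrt (N i * W i) :=
        (Real.mul_self_sqrt (hNW i).le).symm
      rw [div_eq_div_iff (hU i).ne' hV.ne']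
      simp only [U]
      rw [h1]
      field_simp
      ring
      rw [Real.sq_sqrt (sq_nonneg (Real.sqrt (N i * W i)))]
    rw [Finset.sum_congr rfl fun i _ => this i, ← Finset.sum_div, ← Finset.sum_mul, sq]
  refine ⟨hU, hsum, hval, ?_⟩
  intro U' hU' hsum'
  rw [hval]
  have key := Finset.sq_sum_div_le_sum_sq_div Finset.univ
    (fun i => Real.sqrt (N i * W i)) (fun i _ => hU' i)
  rw [hsum'] at key
  refine key.trans_eq ?_
  refine Finset.sum_congr rfl fun i _ => ?_
  rw [Real.sq_sqrt (hNW i).le]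
end

section
/- For every feasible caching vector U (i.e., U i > 0 for all i and ∑ i, U i = V), the maximal per-file call ratio satisfies (⨆ i, W i / U i) ≥ (∑ j, W j) / V; equivalently, there exists an index i with W i / U i ≥ (∑ j, W j) / V. -/
open Finset

theorem Finset.exists_sum_div_sum_le_div {ι 𝕜 : Type*} [Field 𝕜] [LinearOrder 𝕜]
    [IsStrictOrderedRing 𝕜] {s : Finset ι} (hs : s.Nonempty) (f : ι → 𝕜) {g : ι → 𝕜}
    (hg : ∀ i ∈ s, 0 < g i) :
    ∃ i ∈ s, (∑ j ∈ s, f j) / (∑ j ∈ s, g j) ≤ f i / g i := by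
  have hsum_g : 0 < ∑ j ∈ s, g j := sum_pos hg hs
  have hweighted : ∑ i ∈ s, (∑ j ∈ s, f j) / (∑ j ∈ s, g j) * g i ≤ ∑ i ∈ s, f i := by
    rw [← mul_sum, div_mul_cancel₀ _ hsum_g.ne']
  obtain ⟨i, hi, hle⟩ := exists_le_of_sum_le hs hweighted
  exact ⟨i, hi, (le_div_iff₀ (hg i hi)).mpr hle⟩

theorem caching_F2_lower_bound_general (H : ℕ) (hH : 0 < H)
    (W : Fin H → ℝ)
    (V : ℝ)
    (U : Fin H → ℝ) (hU : ∀ i, 0 < U i) (hsum : ∑ i, U i = V) :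
    (⨆ i, W i / U i) ≥ (∑ j, W j) / V ∧
    ∃ i, W i / U i ≥ (∑ j, W j) / V := by
  have : Nonempty (Fin H) := ⟨⟨0, hH⟩⟩
  obtain ⟨i, -, hi⟩ := exists_sum_div_sum_le_div univ_nonempty W fun i _ ↦ hU i
  rw [hsum] at hi
  exact ⟨le_ciSup_of_le (Set.finite_range _).bddAbove i hi, i, hi⟩

/-- Theorem 2 (lower bound part): for every feasible caching vector `U`,
the maximal per-file call ratio `F₂(U) = ⨆ i, W i / U i` is at least
`(∑ j, W j) / V`; equivalently, some index `i` has `W i / U i ≥ (∑ j, W j) / V`. -/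
theorem caching_F2_lower_bound (H : ℕ) (hH : 0 < H)
    (W : Fin H → ℝ) (hW : ∀ i, 0 < W i)
    (V : ℝ) (hV : 0 < V)
    (U : Fin H → ℝ) (hU : ∀ i, 0 < U i) (hsum : ∑ i, U i = V) :
    (⨆ i, W i / U i) ≥ (∑ j, W j) / V ∧
    ∃ i, W i / U i ≥ (∑ j, W j) / V :=
  caching_F2_lower_bound_general H hH W V U hU hsum
end

section
/- The caching vector defined by U i = V * W i / (∑ j, W j) is feasible (each U i > 0 and ∑ i, U i = V), and for it W i / U i = (∑ j, W j) / V for every index i; consequently its maximal per-file call ratio equals (∑ j, W j) / V and it minimizes F₂ over all feasible caching vectors. -/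
/-! Proportional caching makes every ratio `W i / U i` equal to `(∑ W) / V`. For any other
feasible `U'`, if all ratios `W i / U' i` were below `(∑ W) / V`, summing `W i < (∑ W) / V * U' i`
over `i` would give `∑ W < ∑ W`. -/

open Finset

section ProportionalAllocation

variable {ι : Type*} [Fintype ι]

theorem sum_mul_div_sum_self (V : ℝ) (W : ι → ℝ) (hW : ∑ j, W j ≠ 0) :
    ∑ i, V * W i / ∑ j, W j = V := by
  rw [← sum_div, ← mul_sum, mul_div_cancel_right₀ V hW]

theorem div_mul_div_sum_self {V w : ℝ} (W : ι → ℝ) (hw : w ≠ 0) :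
    w / (V * w / ∑ j, W j) = (∑ j, W j) / V := by
  rw [div_div_eq_mul_div, mul_comm w, mul_div_mul_right _ _ hw]

theorem exists_sum_div_sum_le_div [Nonempty ι] (W U : ι → ℝ) (hU : ∀ i, 0 < U i) :
    ∃ i, (∑ j, W j) / (∑ j, U j) ≤ W i / U i := by
  have hUsum : 0 < ∑ j, U j := sum_pos (fun i _ => hU i) univ_nonempty
  have hsum : ∑ i, (∑ j, W j) / (∑ j, U j) * U i ≤ ∑ i, W i := by
    rw [← mul_sum, div_mul_cancel₀ _ hUsum.ne']
  obtain ⟨i, -, hi⟩ := exists_le_of_sum_le univ_nonempty hsum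
  exact ⟨i, (le_div_iff₀ (hU i)).mpr hi⟩

theorem sum_div_sum_le_iSup_div [Nonempty ι] (W U : ι → ℝ) (hU : ∀ i, 0 < U i) :
    (∑ j, W j) / (∑ j, U j) ≤ ⨆ i, W i / U i := by
  obtain ⟨i, hi⟩ := exists_sum_div_sum_le_div W U hU
  exact le_ciSup_of_le (Finite.bddAbove_range _) i hi

end ProportionalAllocation

/-- Theorem 2 (attainment part): the caching vector `U i = V * W i / ∑ j, W j`
is feasible, has `W i / U i = (∑ j, W j) / V` for every `i`, hence its maximal
per-file call ratio equals `(∑ j, W j) / V`, and it minimizes `F₂` over all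
feasible caching vectors. -/
theorem caching_F2_attained (H : ℕ) (hH : 0 < H)
    (W : Fin H → ℝ) (hW : ∀ i, 0 < W i)
    (V : ℝ) (hV : 0 < V) :
    let U : Fin H → ℝ := fun i => V * W i / ∑ j, W j
    (∀ i, 0 < U i) ∧ (∑ i, U i = V) ∧
    (∀ i, W i / U i = (∑ j, W j) / V) ∧
    ((⨆ i, W i / U i) = (∑ j, W j) / V) ∧
    (∀ U' : Fin H → ℝ, (∀ i, 0 < U' i) → (∑ i, U' i = V) →
      (⨆ i, W i / U i) ≤ ⨆ i, W i / U' i) := by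
  intro U
  have : Nonempty (Fin H) := ⟨⟨0, hH⟩⟩
  have hS : 0 < ∑ j, W j := sum_pos (fun i _ => hW i) univ_nonempty
  have hratio : ∀ i, W i / U i = (∑ j, W j) / V :=
    fun i => div_mul_div_sum_self W (hW i).ne'
  have hsup : (⨆ i, W i / U i) = (∑ j, W j) / V := by
    simp only [hratio, ciSup_const]
  refine ⟨fun i => div_pos (mul_pos hV (hW i)) hS, sum_mul_div_sum_self V W hS.ne', hratio, hsup,
    ?_⟩
  intro U' hU' hsum'
  rw [hsup, ← hsum']
  exact sum_div_sum_le_iSup_div W U' hU'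
end

section
/- The caching vector defined by U i = V * N i * W i / (∑ j, N j * W j) is feasible (each U i > 0 and ∑ i, U i = V), and for it N i * W i / U i = (∑ j, N j * W j) / V for every index i; consequently its maximal weighted per-file call ratio equals (∑ j, N j * W j) / V and it minimizes F₃ over all feasible caching vectors. -/
/-- Theorem 3 (attainment part): the caching vector
`U i = V * N i * W i / ∑ j, N j * W j` is feasible, has
`N i * W i / U i = (∑ j, N j * W j) / V` for every `i`, hence its maximal
weighted per-file call ratio equals `(∑ j, N j * W j) / V`, and it minimizes
`F₃` over all feasible caching vectors. -/
theorem caching_F3_attained (H : ℕ) (hH : 0 < H)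
    (W N : Fin H → ℝ) (hW : ∀ i, 0 < W i) (hN : ∀ i, 0 < N i)
    (V : ℝ) (hV : 0 < V) :
    let U : Fin H → ℝ := fun i => V * N i * W i / ∑ j, N j * W j
    (∀ i, 0 < U i) ∧ (∑ i, U i = V) ∧
    (∀ i, N i * W i / U i = (∑ j, N j * W j) / V) ∧
    ((⨆ i, N i * W i / U i) = (∑ j, N j * W j) / V) ∧
    (∀ U' : Fin H → ℝ, (∀ i, 0 < U' i) → (∑ i, U' i = V) →
      (⨆ i, N i * W i / U i) ≤ ⨆ i, N i * W i / U' i) := by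
  intro U
  haveI : Nonempty (Fin H) := ⟨⟨0, hH⟩⟩
  set S := ∑ j, N j * W j with hS
  have hSpos : 0 < S := Finset.sum_pos (fun i _ => mul_pos (hN i) (hW i)) ⟨⟨0, hH⟩, Finset.mem_univ _⟩
  have hUpos : ∀ i, 0 < U i := fun i =>
    div_pos (mul_pos (mul_pos hV (hN i)) (hW i)) hSpos
  have hsum : ∑ i, U i = V := by
    simp only [U]
    rw [← Finset.sum_div, show (∑ i, V * N i * W i) = V * S from by
      rw [Finset.mul_sum]; exact Finset.sum_congr rfl fun i _ => by ring]
    rw [mul_div_assoc, div_self hSpos.ne', mul_one]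
  have hratio : ∀ i, N i * W i / U i = S / V := by
    intro i
    have : U i = V * (N i * W i) / S := by simp only [U]; ring_nf; rfl
    rw [this]
    field_simp [hSpos.ne', hV.ne', (hN i).ne', (hW i).ne']
  have hsup : (⨆ i, N i * W i / U i) = S / V := by
    rw [show (fun i => N i * W i / U i) = fun _ => S / V from funext hratio]
    exact ciSup_const
  refine ⟨hUpos, hsum, hratio, hsup, ?_⟩
  intro U' hU' hsum'
  rw [hsup]
  -- exists i with N i W i / U' i ≥ S / V
  have hex : ∃ i, S / V ≤ N i * W i / U' i := by
    by_contra h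
    push_neg at h
    have : V < ∑ i, U' i := by
      calc V = ∑ i, U i := hsum.symm
        _ < ∑ i, U' i := by
          apply Finset.sum_lt_sum_of_nonempty Finset.univ_nonempty
          intro i _
          have hi := h i
          have h2 : N i * W i / U' i < S / V := hi
          -- U i = V * (N i * W i) / S
          have hUi : U i = V * (N i * W i) / S := by simp only [U]; ring_nf; rfl
          rw [hUi]
          rw [div_lt_div_iff₀ (hU' i) hV] at h2
          rw [div_lt_iff₀ hSpos]
          nlinarith [hU' i, hSpos, hV]
    rw [hsum'] at this; exact lt_irrefl _ this
  obtain ⟨i, hi⟩ := hex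
  exact hi.trans (le_ciSup (f := fun i => N i * W i / U' i) (Finite.bddAbove_range _) i)
end

section
/- The caching vector defined by U i = W i - ((∑ j, W j) - V) / H satisfies ∑ i, U i = V and attains ∑ i, (W i - U i)^2 = ((∑ j, W j) - V)^2 / H; consequently, if moreover 1 ≤ W i - ((∑ j, W j) - V) / H ≤ W i for every i, then this vector minimizes F₄ over all U with ∑ i, U i = V and 1 ≤ U i ≤ W i for all i. -/
/-- Theorem 4 (case `V < ∑ W`): the caching vector
`U i = W i - ((∑ j, W j) - V) / H` satisfies `∑ i, U i = V`, attains
`∑ i, (W i - U i)² = ((∑ j, W j) - V)² / H`, and, if feasible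
(`1 ≤ U i ≤ W i` for all `i`), minimizes `F₄` over the feasible set. -/
theorem caching_F4_attained (H : ℕ) (hH : 0 < H)
    (W : Fin H → ℝ) (V : ℝ) (hV : V ≤ ∑ j, W j) :
    let U : Fin H → ℝ := fun i => W i - ((∑ j, W j) - V) / H
    (∑ i, U i = V) ∧
    (∑ i, (W i - U i) ^ 2 = ((∑ j, W j) - V) ^ 2 / H) ∧
    ((∀ i, 1 ≤ U i ∧ U i ≤ W i) →
      ∀ U' : Fin H → ℝ, (∑ i, U' i = V) → (∀ i, 1 ≤ U' i ∧ U' i ≤ W i) →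
        ∑ i, (W i - U i) ^ 2 ≤ ∑ i, (W i - U' i) ^ 2) := by
  intro U
  have hHR : (H : ℝ) ≠ 0 := Nat.cast_ne_zero.mpr hH.ne'
  have hsum : ∑ i, U i = V := by
    simp only [U, Finset.sum_sub_distrib, Finset.sum_const, Finset.card_univ,
      Fintype.card_fin, nsmul_eq_mul]
    field_simp
    ring
  have hval : ∑ i, (W i - U i) ^ 2 = ((∑ j, W j) - V) ^ 2 / H := by
    simp only [U, sub_sub_cancel]
    rw [Finset.sum_const, Finset.card_univ, Fintype.card_fin, nsmul_eq_mul,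
      div_pow]
    field_simp
  refine ⟨hsum, hval, fun _ U' hU' _ => ?_⟩
  rw [hval]
  have h := sq_sum_le_card_mul_sum_sq (s := Finset.univ) (f := fun i => W i - U' i)
  rw [Finset.sum_sub_distrib, hU', Finset.card_univ, Fintype.card_fin] at h
  rw [div_le_iff₀ (by positivity : (0:ℝ) < H)] at *
  calc ((∑ j, W j) - V) ^ 2 ≤ (H : ℝ) * ∑ i, (W i - U' i) ^ 2 := h
    _ = (∑ i, (W i - U' i) ^ 2) * H := mul_comm _ _
end

section
/- The minimal value of F₁ over all feasible caching vectors equals (∑ i, Real.sqrt (N i * W i))^2 / V; that is, this value is a lower bound for F₁ on the feasible set and is attained by some feasible caching vector (namely U i = V * Real.sqrt (N i * W i) / ∑ j, Real.sqrt (N j * W j)). -/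
/-- Theorem 1 combined: the minimal value of `F₁(U) = ∑ i, N i * W i / U i`
over all feasible caching vectors is `(∑ i, √(N i * W i))² / V`, attained by
`U i = V * √(N i * W i) / ∑ j, √(N j * W j)`. -/
theorem caching_F1_isLeast (H : ℕ) (hH : 0 < H)
    (W N : Fin H → ℝ) (hW : ∀ i, 0 < W i) (hN : ∀ i, 0 < N i)
    (V : ℝ) (hV : 0 < V) :
    IsLeast
      ((fun U : Fin H → ℝ => ∑ i, N i * W i / U i) ''
        {U | (∀ i, 0 < U i) ∧ ∑ i, U i = V})
      ((∑ i, Real.sqrt (N i * W i)) ^ 2 / V) ∧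
    (let U : Fin H → ℝ :=
      fun i => V * Real.sqrt (N i * W i) / ∑ j, Real.sqrt (N j * W j)
    (∀ i, 0 < U i) ∧ (∑ i, U i = V) ∧
      ∑ i, N i * W i / U i = (∑ i, Real.sqrt (N i * W i)) ^ 2 / V) := by
  have hNW : ∀ i, 0 < N i * W i := fun i => mul_pos (hN i) (hW i)
  have hsq : ∀ i, Real.sqrt (N i * W i) > 0 := fun i => Real.sqrt_pos.2 (hNW i)
  have hS : 0 < ∑ j, Real.sqrt (N j * W j) :=
    Finset.sum_pos (fun j _ => hsq j) (Finset.univ_nonempty_iff.2 ⟨⟨0, hH⟩⟩)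
  set S := ∑ j, Real.sqrt (N j * W j) with hSdef
  have hUpos : ∀ i, 0 < V * Real.sqrt (N i * W i) / S :=
    fun i => div_pos (mul_pos hV (hsq i)) hS
  have hUsum : (∑ i, V * Real.sqrt (N i * W i) / S) = V := by
    rw [← Finset.sum_div, ← Finset.mul_sum, mul_div_assoc, div_self hS.ne', mul_one]
  have hUval : (∑ i, N i * W i / (V * Real.sqrt (N i * W i) / S)) = S ^ 2 / V := by
    have : ∀ i : Fin H, N i * W i / (V * Real.sqrt (N i * W i) / S)
        = Real.sqrt (N i * W i) * S / V := by
      intro i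
      have h1 : N i * W i = Real.sqrt (N i * W i) * Real.sqrt (N i * W i) :=
        (Real.mul_self_sqrt (hNW i).le).symm
      have h2 : Real.sqrt (N i * W i) ≠ 0 := (hsq i).ne'
      rw [h1]
      field_simp
      ring_nf
      rw [Real.sq_sqrt (hNW i).le, Real.sq_sqrt (hNW i).le]
    rw [Finset.sum_congr rfl (fun i _ => this i), ← Finset.sum_div, ← Finset.sum_mul,
      ← hSdef, sq]
  refine ⟨⟨⟨fun i => V * Real.sqrt (N i * W i) / S, ⟨hUpos, hUsum⟩, hUval⟩, ?_⟩,
    hUpos, hUsum, hUval⟩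
  rintro x ⟨U, ⟨hU, hUV⟩, rfl⟩
  have := Finset.sq_sum_div_le_sum_sq_div Finset.univ
    (fun i => Real.sqrt (N i * W i)) (g := U) (fun i _ => hU i)
  rw [hUV] at this
  refine this.trans_eq (Finset.sum_congr rfl fun i _ => ?_)
  rw [Real.sq_sqrt (hNW i).le]
end

section
/- The minimal value of F₃ over all feasible caching vectors equals (∑ j, N j * W j) / V; that is, this value is a lower bound for the maximum over i of N i * W i / U i on the feasible set and is attained by the feasible caching vector U i = V * N i * W i / (∑ j, N j * W j). -/
/-- Theorem 3 combined: the minimal value of `F₃(U) = ⨆ i, N i * W i / U i`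
over all feasible caching vectors is `(∑ j, N j * W j) / V`, attained by
`U i = V * N i * W i / ∑ j, N j * W j`. -/
theorem caching_F3_isLeast (H : ℕ) (hH : 0 < H)
    (W N : Fin H → ℝ) (hW : ∀ i, 0 < W i) (hN : ∀ i, 0 < N i)
    (V : ℝ) (hV : 0 < V) :
    IsLeast
      ((fun U : Fin H → ℝ => ⨆ i, N i * W i / U i) ''
        {U | (∀ i, 0 < U i) ∧ ∑ i, U i = V})
      ((∑ j, N j * W j) / V) ∧
    (let U : Fin H → ℝ := fun i => V * N i * W i / ∑ j, N j * W j
    (∀ i, 0 < U i) ∧ (∑ i, U i = V) ∧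
      (⨆ i, N i * W i / U i) = (∑ j, N j * W j) / V) := by
  have hne : Nonempty (Fin H) := ⟨⟨0, hH⟩⟩
  have hSpos : 0 < ∑ j, N j * W j :=
    Finset.sum_pos (fun i _ => mul_pos (hN i) (hW i)) ⟨⟨0, hH⟩, Finset.mem_univ _⟩
  have key : ∀ i, N i * W i / (V * N i * W i / ∑ j, N j * W j) = (∑ j, N j * W j) / V := by
    intro i
    have h1 : N i ≠ 0 := (hN i).ne'
    have h2 : W i ≠ 0 := (hW i).ne'
    field_simp
  have hUpos : ∀ i, 0 < V * N i * W i / ∑ j, N j * W j := by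
    intro i
    have := hN i; have := hW i
    positivity
  have hUsum : ∑ i, V * N i * W i / ∑ j, N j * W j = V := by
    rw [← Finset.sum_div]
    have : ∑ i, V * N i * W i = V * ∑ j, N j * W j := by
      rw [Finset.mul_sum]; apply Finset.sum_congr rfl; intro i _; ring
    rw [this, mul_div_assoc, div_self hSpos.ne', mul_one]
  have hsup : (⨆ i, N i * W i / (V * N i * W i / ∑ j, N j * W j)) = (∑ j, N j * W j) / V := by
    simp only [key, ciSup_const]
  refine ⟨⟨⟨fun i => V * N i * W i / ∑ j, N j * W j, ⟨hUpos, hUsum⟩, hsup⟩, ?_⟩,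
    hUpos, hUsum, hsup⟩
  rintro x ⟨U, ⟨hU, hUs⟩, rfl⟩
  have hex : ∃ i, (∑ j, N j * W j) / V ≤ N i * W i / U i := by
    by_contra h
    push_neg at h
    have hlt : ∀ i, N i * W i < (∑ j, N j * W j) / V * U i :=
      fun i => (div_lt_iff₀ (hU i)).mp (h i)
    have hsum : (∑ j, N j * W j) < (∑ j, N j * W j) / V * V := by
      calc (∑ j, N j * W j) < ∑ i, (∑ j, N j * W j) / V * U i :=
            Finset.sum_lt_sum_of_nonempty ⟨⟨0, hH⟩, Finset.mem_univ _⟩ (fun i _ => hlt i)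
        _ = (∑ j, N j * W j) / V * V := by rw [← Finset.mul_sum, hUs]
    rw [div_mul_cancel₀ _ hV.ne'] at hsum
    exact lt_irrefl _ hsum
  obtain ⟨i, hi⟩ := hex
  exact hi.trans (le_ciSup (Set.finite_range fun i => N i * W i / U i).bddAbove i)
end
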